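/- arXiv:2512.01708 — 2 statements merged into one kernel-verified Lean document; each statement's English description precedes it below -/
import Mathlib

section
/- Let n ≥ 1, let X, X' ∈ ℝ^{n×d} be two data matrices whose rows agree except at a single index k, fix B ∈ ℝ^{d×d}, indices i, j ∈ {1,…,d}, and L ≥ 0. If |X_{k,i}·((XB)_{k,j} − X_{k,j})| ≤ L and |X'_{k,i}·((X'B)_{k,j} − X'_{k,j})| ≤ L, then the (i,j) coordinate of the least-squares gradient satisfies |(1/n)(Xᵀ(XB − X))_{i,j} − (1/n)(X'ᵀ(X'B − X'))_{i,j}| ≤ 2L/n. -/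
open Matrix

/-- Sensitivity of a single coordinate of the least-squares gradient: if two data
matrices `X, X'` agree on all rows except row `k`, and the per-sample gradient entry at
row `k` is bounded by `L` for both, then the `(i,j)` entries of the gradients
`(1/n)·Xᵀ(XB − X)` differ by at most `2L/n`. -/
theorem least_squares_gradient_coordinate_sensitivity {n d : ℕ} (hn : 1 ≤ n)
    (X X' : Matrix (Fin n) (Fin d) ℝ) (k : Fin n)
    (hrow : ∀ r : Fin n, r ≠ k → X r = X' r)
    (B : Matrix (Fin d) (Fin d) ℝ) (i j : Fin d) (L : ℝ) (hL : 0 ≤ L)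
    (h1 : |X k i * ((X * B) k j - X k j)| ≤ L)
    (h2 : |X' k i * ((X' * B) k j - X' k j)| ≤ L) :
    |(1 / (n : ℝ)) * (Xᵀ * (X * B - X)) i j
      - (1 / (n : ℝ)) * (X'ᵀ * (X' * B - X')) i j| ≤ 2 * L / n := by
  have hkey : (Xᵀ * (X * B - X)) i j - (X'ᵀ * (X' * B - X')) i j
      = X k i * ((X * B) k j - X k j) - X' k i * ((X' * B) k j - X' k j) := by
    have e1 : (Xᵀ * (X * B - X)) i j
        = ∑ r, X r i * ((X * B) r j - X r j) := by
      simp [Matrix.mul_apply, Matrix.transpose_apply, Matrix.sub_apply]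
    have e2 : (X'ᵀ * (X' * B - X')) i j
        = ∑ r, X' r i * ((X' * B) r j - X' r j) := by
      simp [Matrix.mul_apply, Matrix.transpose_apply, Matrix.sub_apply]
    rw [e1, e2, ← Finset.sum_sub_distrib]
    rw [Finset.sum_eq_single k]
    · intro r _ hr
      have hXr := hrow r hr
      have hRB : (X * B) r j = (X' * B) r j := by
        simp [Matrix.mul_apply]
        exact Finset.sum_congr rfl (fun m _ => by rw [congrFun hXr m])
      rw [congrFun hXr i, congrFun hXr j, hRB, sub_self]
    · intro h; exact absurd (Finset.mem_univ k) h
  have hnpos : (0:ℝ) < n := by exact_mod_cast hn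
  rw [← mul_sub, hkey, abs_mul, abs_of_pos (by positivity : (0:ℝ) < 1/(n:ℝ))]
  have : |X k i * ((X * B) k j - X k j) - X' k i * ((X' * B) k j - X' k j)| ≤ 2 * L := by
    calc _ ≤ |X k i * ((X * B) k j - X k j)| + |X' k i * ((X' * B) k j - X' k j)| :=
          abs_sub _ _
      _ ≤ 2 * L := by linarith
  calc 1/(n:ℝ) * |X k i * ((X * B) k j - X k j) - X' k i * ((X' * B) k j - X' k j)|
      ≤ 1/(n:ℝ) * (2*L) := by
        exact mul_le_mul_of_nonneg_left this (by positivity)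
    _ = 2 * L / n := by ring
end

section
/- Let n ≥ 1, X ∈ ℝ^{n×d}, β, W ∈ ℝ^{d×d} and ρ ≥ 0, and let f(B) = (1/(2n))‖X − XB‖_F² + tr(β(B − W)ᵀ) + (ρ/2)‖B − W‖_F². Fix B ∈ ℝ^{d×d} and indices i, j ∈ {1,…,d}, and let E_{i,j} be the matrix with 1 in entry (i,j) and 0 elsewhere. Then the function φ(u) = f(B + u·E_{i,j}) on ℝ is twice differentiable and its second derivative is constant, equal to (1/n)·(XᵀX)_{i,i} + ρ for every u ∈ ℝ; in particular this coordinate-wise smoothness constant does not depend on B, on u, or on the index j. -/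
/-!
Along the line `u ↦ B + u • E_{i,j}` the residual `X - X B` and the deviation `B - W` move
affinely, with directions `-X E_{i,j}` and `E_{i,j}`, and the trace term is linear in `u`.
Hence `φ` is a quadratic polynomial in `u` whose leading coefficient is
`(1/(2n)) ‖X E_{i,j}‖_F² + (ρ/2) ‖E_{i,j}‖_F²`, and `‖X E_{i,j}‖_F²` is the squared norm of the
`i`-th column of `X`, i.e. `(XᵀX)_{i,i}`.
-/

open Matrix

section SumSq

variable {l m n R : Type*} [Fintype l] [Fintype m] [Fintype n] [CommRing R]

theorem Matrix.sum_sum_sq_add_smul (A V : Matrix m n R) (u : R) :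
    ∑ a, ∑ b, ((A + u • V) a b) ^ 2
      = ∑ a, ∑ b, A a b ^ 2 + 2 * u * ∑ a, ∑ b, A a b * V a b
        + u ^ 2 * ∑ a, ∑ b, V a b ^ 2 := by
  simp only [add_apply, smul_apply, smul_eq_mul, Finset.mul_sum, ← Finset.sum_add_distrib]
  exact Finset.sum_congr rfl fun _ _ => Finset.sum_congr rfl fun _ _ => by ring

variable [DecidableEq m] [DecidableEq n]

theorem Matrix.sum_sum_sq_single (i : m) (j : n) (c : R) :
    ∑ a, ∑ b, single i j c a b ^ 2 = c ^ 2 := by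
  simp [single_apply, ite_and]

theorem Matrix.sum_sum_sq_mul_single (X : Matrix l m R) (i : m) (j : n) :
    ∑ a, ∑ b, (X * single i j (1 : R)) a b ^ 2 = (Xᵀ * X) i i := by
  simp [mul_apply, single_apply, ite_and, sq]

end SumSq

theorem exists_hasDerivAt_hasDerivAt_of_eq_quadratic {φ : ℝ → ℝ} {a L K : ℝ}
    (hφ : ∀ u, φ u = a / 2 * u ^ 2 + L * u + K) :
    ∃ g : ℝ → ℝ, (∀ u, HasDerivAt φ (g u) u) ∧ ∀ u, HasDerivAt g a u := by
  refine ⟨fun u => a * u + L, fun u => ?_, fun u => ?_⟩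
  · rw [funext hφ]
    refine ((((hasDerivAt_pow 2 u).const_mul (a / 2)).add
      ((hasDerivAt_id u).const_mul L)).add_const K).congr_deriv ?_
    norm_num; ring
  · simpa using ((hasDerivAt_id u).const_mul a).add_const L

theorem coordinatewise_smoothness_constant_general {n d : ℕ}
    (X : Matrix (Fin n) (Fin d) ℝ) (β W : Matrix (Fin d) (Fin d) ℝ)
    (ρ : ℝ) (B : Matrix (Fin d) (Fin d) ℝ) (i j : Fin d) :
    let f : Matrix (Fin d) (Fin d) ℝ → ℝ := fun M =>
      (1 / (2 * (n : ℝ))) * ∑ a, ∑ b, ((X - X * M) a b) ^ 2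
        + (β * (M - W)ᵀ).trace
        + (ρ / 2) * ∑ a, ∑ b, ((M - W) a b) ^ 2
    let φ : ℝ → ℝ := fun u => f (B + u • Matrix.single i j (1 : ℝ))
    ∃ g : ℝ → ℝ, (∀ u : ℝ, HasDerivAt φ (g u) u) ∧
      ∀ u : ℝ, HasDerivAt g ((1 / (n : ℝ)) * (Xᵀ * X) i i + ρ) u := by
  intro f φ
  set E := single i j (1 : ℝ)
  have residual : ∀ u : ℝ, X - X * (B + u • E) = (X - X * B) + u • -(X * E) := fun u => by
    rw [Matrix.mul_add, Matrix.mul_smul, smul_neg]; abel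
  have deviation : ∀ u : ℝ, B + u • E - W = (B - W) + u • E := fun u => by abel
  refine exists_hasDerivAt_hasDerivAt_of_eq_quadratic (K := f B)
    (L := 1 / (2 * n) * (2 * ∑ a, ∑ b, (X - X * B) a b * -(X * E) a b) + (β * Eᵀ).trace
      + ρ / 2 * (2 * ∑ a, ∑ b, (B - W) a b * E a b)) fun u => ?_
  change f (B + u • E) = _
  simp only [f]
  rw [residual, deviation]
  simp only [sum_sum_sq_add_smul, transpose_add, transpose_smul,
    Matrix.mul_add, Matrix.mul_smul, trace_add, trace_smul, smul_eq_mul, Matrix.neg_apply, neg_sq,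
    sum_sum_sq_mul_single, E, sum_sum_sq_single]
  ring

/-- Coordinate-wise smoothness of the local objective: the restriction
`φ(u) = f(B + u·E_{i,j})` of the local smooth objective along coordinate `(i,j)` is twice
differentiable, with constant second derivative `(1/n)(XᵀX)_{i,i} + ρ`, independent of
`B`, `u` and `j`. -/
theorem coordinatewise_smoothness_constant {n d : ℕ} (hn : 1 ≤ n)
    (X : Matrix (Fin n) (Fin d) ℝ) (β W : Matrix (Fin d) (Fin d) ℝ)
    (ρ : ℝ) (hρ : 0 ≤ ρ) (B : Matrix (Fin d) (Fin d) ℝ) (i j : Fin d) :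
    let f : Matrix (Fin d) (Fin d) ℝ → ℝ := fun M =>
      (1 / (2 * (n : ℝ))) * ∑ a, ∑ b, ((X - X * M) a b) ^ 2
        + (β * (M - W)ᵀ).trace
        + (ρ / 2) * ∑ a, ∑ b, ((M - W) a b) ^ 2
    let φ : ℝ → ℝ := fun u => f (B + u • Matrix.single i j (1 : ℝ))
    ∃ g : ℝ → ℝ, (∀ u : ℝ, HasDerivAt φ (g u) u) ∧
      ∀ u : ℝ, HasDerivAt g ((1 / (n : ℝ)) * (Xᵀ * X) i i + ρ) u :=
  coordinatewise_smoothness_constant_general X β W ρ B i j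
end
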